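/- For a single-degree vertex i with unique neighbor j, contracting i into j (removing i, and adding a self-loop of weight ω(i,j) at j, or increasing the existing self-loop by ω(i,j)) preserves the total edge weight m and, for any partition of the contracted graph, the modularity equals the modularity of the corresponding partition of the original graph in which i is placed in the same community as j. -/
import Mathlib


open Finset

variable {V : Type*} [Fintype V] [DecidableEq V]

/-- Weighted degree with the self-loop convention: a self-loop of weight `s` at `v`
contributes `2s` to `k_v`. -/
noncomputable def degL (ω : V → V → ℝ) (v : V) : ℝ := ω v v + ∑ u, ω v u

/-- Total edge weight `m = (1/2) ∑_v k_v`. -/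
noncomputable def mL (ω : V → V → ℝ) : ℝ := (∑ v, degL ω v) / 2

/-- Community degree `a_C = ∑_{v ∈ C} k_v`. -/
noncomputable def aL (ω : V → V → ℝ) (C : Finset V) : ℝ := ∑ v ∈ C, degL ω v

/-- Total intra-community edge weight of `C`, each edge counted once and each self-loop
counted once. -/
noncomputable def eIntL (ω : V → V → ℝ) (C : Finset V) : ℝ :=
  ((∑ u ∈ C, ∑ v ∈ C, ω u v) + ∑ u ∈ C, ω u u) / 2

/-- The community with label `ℓ` of a labelling `c`. -/
def commOf {α : Type*} [DecidableEq α] (c : V → α) (ℓ : α) : Finset V :=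
  univ.filter (fun v => c v = ℓ)

/-- Modularity `Q = ∑_C (e_int(C)/m − (a_C/2m)²)` of the partition given by `c`. -/
noncomputable def QL {α : Type*} [Fintype α] [DecidableEq α]
    (ω : V → V → ℝ) (c : V → α) : ℝ :=
  ∑ ℓ, (eIntL ω (commOf c ℓ) / mL ω - (aL ω (commOf c ℓ) / (2 * mL ω)) ^ 2)

/-- Contraction of the single-degree vertex `i` into its unique neighbor `j`: vertex `i` is
removed and the self-loop weight at `j` is increased by `ω(i,j)`. -/
noncomputable def contractW (ω : V → V → ℝ) (i j : V) :
    {v : V // v ≠ i} → {v : V // v ≠ i} → ℝ :=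
  fun u v => if (u : V) = j ∧ (v : V) = j then ω j j + ω i j else ω (u : V) (v : V)

private lemma sum_subtype_ne' (i : V) (g : V → ℝ) :
    ∑ x : {v : V // v ≠ i}, g ↑x = (∑ v, g v) - g i := by
  rw [← Finset.sum_erase_eq_sub (Finset.mem_univ i)]
  exact (Finset.sum_subtype _ (fun x => by simp) g).symm

/-- For a single-degree vertex `i` with unique neighbor `j`, contracting
`i` into `j` preserves the total edge weight, and for any partition `c'` of the contracted
graph, its modularity equals the modularity of the corresponding partition of the original
graph in which `i` is placed in the same community as `j`. -/
theorem contraction_preserves_modularity {α : Type*} [Fintype α] [DecidableEq α]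
    (ω : V → V → ℝ) (hsym : ∀ a b, ω a b = ω b a) (hnn : ∀ a b, 0 ≤ ω a b)
    (i j : V) (hne : j ≠ i) (hm : 0 < mL ω)
    (hsingle : ∀ v, v ≠ j → ω i v = 0) (hpos : 0 < ω i j)
    (c' : {v : V // v ≠ i} → α) :
    mL (contractW ω i j) = mL ω ∧
      QL (contractW ω i j) c' =
        QL ω (fun v => if h : v = i then c' ⟨j, hne⟩ else c' ⟨v, h⟩) := by
  have hij : i ≠ j := hne.symm
  have hωii : ω i i = 0 := hsingle i hij
  have hωj : ∀ v, ω i v = if v = j then ω i j else 0 := by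
    intro v
    by_cases hv : v = j
    · simp [hv]
    · simp [hv, hsingle v hv]
  have hdegi : degL ω i = ω i j := by
    unfold degL
    rw [hωii, zero_add]
    exact Finset.sum_eq_single j (fun b _ hb => hsingle b hb)
      (fun h => absurd (Finset.mem_univ j) h)
  -- degree after contraction
  have hW : ∀ x : {v : V // v ≠ i}, degL (contractW ω i j) x
      = degL ω ↑x + (if (x : V) = j then ω i j else 0) := by
    intro x
    unfold degL contractW
    by_cases hx : (x : V) = j
    · simp only [hx, and_self, if_true, ite_true, true_and]
      have h1 : (∑ u : {v : V // v ≠ i}, if (u : V) = j then ω j j + ω i j else ω j ↑u)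
          = (∑ v, if v = j then ω j j + ω i j else ω j v)
            - (if i = j then ω j j + ω i j else ω j i) :=
        sum_subtype_ne' i (fun v => if v = j then ω j j + ω i j else ω j v)
      rw [h1, if_neg hij]
      have h2 : (∑ v, if v = j then ω j j + ω i j else ω j v)
          = (∑ v, ω j v) + ω i j := by
        have hpt : ∀ v, (if v = j then ω j j + ω i j else ω j v)
            = ω j v + (if v = j then ω i j else 0) := by
          intro v; by_cases hv : v = j <;> simp [hv]
        rw [Finset.sum_congr rfl (fun v _ => hpt v), Finset.sum_add_distrib,
          Finset.sum_ite_eq' Finset.univ j (fun _ => ω i j), if_pos (Finset.mem_univ j)]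
      rw [h2]
      have h3 : ω j i = ω i j := hsym j i
      linarith
    · simp only [hx, false_and, if_false, ite_false]
      have h1 : (∑ u : {v : V // v ≠ i}, ω ↑x ↑u)
          = (∑ v, ω ↑x v) - ω ↑x i := sum_subtype_ne' i (fun v => ω ↑x v)
      have h2 : ω ↑x i = 0 := by rw [hsym]; exact hsingle _ hx
      rw [h1, h2]
      ring
  -- total weight preserved
  have hsum : (∑ x : {v : V // v ≠ i}, degL (contractW ω i j) x) = ∑ v, degL ω v := by
    rw [Finset.sum_congr rfl (fun x _ => hW x), Finset.sum_add_distrib]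
    have h1 : (∑ x : {v : V // v ≠ i}, degL ω ↑x) = (∑ v, degL ω v) - degL ω i :=
      sum_subtype_ne' i (degL ω)
    have h2 : (∑ x : {v : V // v ≠ i}, if (x : V) = j then ω i j else 0)
        = (∑ v, if v = j then ω i j else 0) - (if i = j then ω i j else 0) :=
      sum_subtype_ne' i (fun v => if v = j then ω i j else 0)
    rw [h1, h2, if_neg hij, Finset.sum_ite_eq' Finset.univ j (fun _ => ω i j),
      if_pos (Finset.mem_univ j), hdegi]
    ring
  have hm' : mL (contractW ω i j) = mL ω := by
    unfold mL; rw [hsum]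
  refine ⟨hm', ?_⟩
  unfold QL
  set c : V → α := fun v => if h : v = i then c' ⟨j, hne⟩ else c' ⟨v, h⟩ with hc
  refine Finset.sum_congr rfl (fun ℓ _ => ?_)
  have hci : c i = c' ⟨j, hne⟩ := by rw [hc]; simp
  have hcx : ∀ x : {v : V // v ≠ i}, c ↑x = c' x := by
    intro x; rw [hc]; simp [x.2]
  have hPj : (j ∈ commOf c ℓ) ↔ c' ⟨j, hne⟩ = ℓ := by
    simp [commOf, hc, hne]
  -- transfer of sums from the contracted communities to the original ones
  have hsumC : ∀ g : V → ℝ, ∑ x ∈ commOf c' ℓ, g ↑x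
      = (∑ v ∈ commOf c ℓ, g v) - (if c' ⟨j, hne⟩ = ℓ then g i else 0) := by
    intro g
    calc ∑ x ∈ commOf c' ℓ, g ↑x
        = ∑ x : {v : V // v ≠ i}, (if c' x = ℓ then g ↑x else 0) := by
          simp only [commOf, Finset.sum_filter]
      _ = ∑ x : {v : V // v ≠ i}, (if c ↑x = ℓ then g ↑x else 0) := by
          refine Finset.sum_congr rfl (fun x _ => ?_); rw [hcx]
      _ = (∑ v, if c v = ℓ then g v else 0) - (if c i = ℓ then g i else 0) :=
          sum_subtype_ne' i (fun v => if c v = ℓ then g v else 0)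
      _ = (∑ v ∈ commOf c ℓ, g v) - (if c' ⟨j, hne⟩ = ℓ then g i else 0) := by
          simp only [commOf, Finset.sum_filter, hci]
  -- indicator sums
  have hind : ∀ r : ℝ, (∑ x ∈ commOf c' ℓ, if (x : V) = j then r else 0)
      = if j ∈ commOf c ℓ then r else 0 := by
    intro r
    have h1 : (∑ x ∈ commOf c' ℓ, if (x : V) = j then r else 0)
        = (∑ v ∈ commOf c ℓ, if v = j then r else 0)
          - (if c' ⟨j, hne⟩ = ℓ then (if i = j then r else 0) else 0) :=
      hsumC (fun v => if v = j then r else 0)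
    rw [h1, Finset.sum_ite_eq' (commOf c ℓ) j (fun _ => r)]
    simp [hij]
  -- aL preserved
  have haL : aL (contractW ω i j) (commOf c' ℓ) = aL ω (commOf c ℓ) := by
    unfold aL
    have h1 : (∑ x ∈ commOf c' ℓ, degL ω ↑x)
        = (∑ v ∈ commOf c ℓ, degL ω v) - (if c' ⟨j, hne⟩ = ℓ then degL ω i else 0) :=
      hsumC (degL ω)
    rw [Finset.sum_congr rfl (fun x _ => hW x), Finset.sum_add_distrib,
      h1, hind (ω i j), hdegi]
    by_cases hP : c' ⟨j, hne⟩ = ℓ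
    · rw [if_pos hP, if_pos (hPj.mpr hP)]; ring
    · rw [if_neg hP, if_neg (fun h => hP (hPj.mp h))]; ring
  -- diagonal part of eIntL
  have hdiag : (∑ x ∈ commOf c' ℓ, contractW ω i j x x)
      = (∑ v ∈ commOf c ℓ, ω v v) + (if j ∈ commOf c ℓ then ω i j else 0) := by
    have h0 : ∀ x : {v : V // v ≠ i}, contractW ω i j x x
        = ω ↑x ↑x + (if (x : V) = j then ω i j else 0) := by
      intro x; unfold contractW; by_cases hx : (x : V) = j <;> simp [hx]
    have h1 : (∑ x ∈ commOf c' ℓ, ω ↑x ↑x)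
        = (∑ v ∈ commOf c ℓ, ω v v) - (if c' ⟨j, hne⟩ = ℓ then ω i i else 0) :=
      hsumC (fun v => ω v v)
    rw [Finset.sum_congr rfl (fun x _ => h0 x), Finset.sum_add_distrib, h1,
      hind (ω i j), hωii]
    simp
  have hωiv : (∑ v ∈ commOf c ℓ, ω i v) = if j ∈ commOf c ℓ then ω i j else 0 := by
    rw [Finset.sum_congr rfl (fun v _ => hωj v),
      Finset.sum_ite_eq' (commOf c ℓ) j (fun _ => ω i j)]
  have hωxi : (∑ x ∈ commOf c' ℓ, ω ↑x i) = if j ∈ commOf c ℓ then ω i j else 0 := by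
    have h1 : (∑ x ∈ commOf c' ℓ, ω ↑x i)
        = (∑ v ∈ commOf c ℓ, ω v i) - (if c' ⟨j, hne⟩ = ℓ then ω i i else 0) :=
      hsumC (fun v => ω v i)
    have h2 : (∑ v ∈ commOf c ℓ, ω v i) = ∑ v ∈ commOf c ℓ, ω i v :=
      Finset.sum_congr rfl (fun v _ => hsym v i)
    rw [h1, h2, hωiv, hωii]
    simp
  -- double sum part of eIntL
  have hdouble : (∑ x ∈ commOf c' ℓ, ∑ y ∈ commOf c' ℓ, contractW ω i j x y)
      = (∑ u ∈ commOf c ℓ, ∑ v ∈ commOf c ℓ, ω u v)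
        - (if j ∈ commOf c ℓ then ω i j else 0) := by
    have hrow : ∀ x : {v : V // v ≠ i}, (∑ y ∈ commOf c' ℓ, contractW ω i j x y)
        = (∑ y ∈ commOf c' ℓ, ω ↑x ↑y)
          + (if (x : V) = j then (if j ∈ commOf c ℓ then ω i j else 0) else 0) := by
      intro x
      by_cases hx : (x : V) = j
      · have h0 : ∀ y : {v : V // v ≠ i}, contractW ω i j x y
            = ω ↑x ↑y + (if (y : V) = j then ω i j else 0) := by
          intro y; unfold contractW; by_cases hy : (y : V) = j <;> simp [hx, hy]
        rw [Finset.sum_congr rfl (fun y _ => h0 y), Finset.sum_add_distrib,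
          hind (ω i j), if_pos hx]
      · have h0 : ∀ y : {v : V // v ≠ i}, contractW ω i j x y = ω ↑x ↑y := by
          intro y; unfold contractW; simp [hx]
        rw [Finset.sum_congr rfl (fun y _ => h0 y), if_neg hx, add_zero]
    have hinner : ∀ x : {v : V // v ≠ i}, (∑ y ∈ commOf c' ℓ, ω ↑x ↑y)
        = (∑ v ∈ commOf c ℓ, ω ↑x v) - (if c' ⟨j, hne⟩ = ℓ then ω ↑x i else 0) := by
      intro x; exact hsumC (fun v => ω ↑x v)
    have houter : (∑ x ∈ commOf c' ℓ, ∑ v ∈ commOf c ℓ, ω ↑x v)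
        = (∑ u ∈ commOf c ℓ, ∑ v ∈ commOf c ℓ, ω u v)
          - (if c' ⟨j, hne⟩ = ℓ then (∑ v ∈ commOf c ℓ, ω i v) else 0) :=
      hsumC (fun u => ∑ v ∈ commOf c ℓ, ω u v)
    rw [Finset.sum_congr rfl (fun x _ => hrow x), Finset.sum_add_distrib,
      hind (if j ∈ commOf c ℓ then ω i j else 0),
      Finset.sum_congr rfl (fun x _ => hinner x), Finset.sum_sub_distrib,
      houter, hωiv]
    by_cases hP : c' ⟨j, hne⟩ = ℓ
    · have hj : j ∈ commOf c ℓ := hPj.mpr hP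
      simp only [if_pos hP, if_pos hj]
      rw [show (∑ x ∈ commOf c' ℓ, ω ↑x i) = ω i j from by rw [hωxi, if_pos hj]]
      ring
    · have hj : j ∉ commOf c ℓ := fun h => hP (hPj.mp h)
      simp only [if_neg hP, if_neg hj]
      simp
  have heI : eIntL (contractW ω i j) (commOf c' ℓ) = eIntL ω (commOf c ℓ) := by
    unfold eIntL
    rw [hdouble, hdiag]
    ring
  rw [hm', haL, heI]
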